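/- Let k ≥ 1 and let u_1, …, u_k be distinct elements of V with prefix sets S_i := {u_1, …, u_i} (S_0 = ∅), satisfying the greedy rule: for every 0 ≤ i < k and every v ∈ V \ S_i, f(u_{i+1} ∣ S_i) ≥ f(v ∣ S_i). Define Δ_k(S) := max over finsets T ⊆ V \ S with |T| ≤ k of ∑_{v ∈ T} f(v∣S), and Λ := min over 0 ≤ i ≤ k of ( f(S_i) + Δ_k(S_i) ). Then for every OPT ⊆ V with |OPT| ≤ k, it holds that f(OPT) ≤ Λ and (1 − 1/e)·Λ ≤ f(S_k). -/

import Mathlib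

/-!
By submodularity, adding `OPT` to `S i` gains at most the sum of the single-element gains, which
is at most `Δ (S i)`; hence `f OPT ≤ Λ`. The greedy element `u i` gains at least the average of
the best `k` single-element gains at `S i`, i.e. at least `Δ (S i) / k ≥ (Λ - f (S i)) / k`, so
`Λ - f (S i)` shrinks by a factor `1 - 1/k` at every step, and `(1 - 1/k)^k ≤ 1/e`.
-/

open Finset

section Marginal

variable {V : Type*} [DecidableEq V] {f : Finset V → ℝ}

def marginal (f : Finset V → ℝ) (v : V) (X : Finset V) : ℝ := f (insert v X) - f X

theorem marginal_nonneg (hmono : Monotone f) (v : V) (X : Finset V) : 0 ≤ marginal f v X :=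
  sub_nonneg.2 (hmono (subset_insert v X))

theorem marginal_antitone (hmono : Monotone f)
    (hsub : ∀ S T : Finset V, f (S ∪ T) + f (S ∩ T) ≤ f S + f T) (a : V) :
    Antitone (marginal f a) := by
  intro X U hXU
  by_cases ha : a ∈ U
  · simpa [marginal, insert_eq_of_mem ha] using marginal_nonneg hmono a X
  · have hunion : insert a X ∪ U = insert a U := by
      rw [insert_union, union_eq_right.2 hXU]
    have hinter : insert a X ∩ U = X := by
      rw [insert_inter_of_notMem ha, inter_eq_left.2 hXU]
    have hsubmod := hsub (insert a X) U
    rw [hunion, hinter] at hsubmod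
    unfold marginal
    linarith

theorem apply_union_le_add_sum_marginal (hmono : Monotone f)
    (hsub : ∀ S T : Finset V, f (S ∪ T) + f (S ∩ T) ≤ f S + f T) (X T : Finset V) :
    f (X ∪ T) ≤ f X + ∑ v ∈ T, marginal f v X := by
  induction T using Finset.induction with
  | empty => simp
  | insert a T ha ih =>
    have hdim := marginal_antitone hmono hsub a (subset_union_left : X ⊆ X ∪ T)
    rw [sum_insert ha, union_insert]
    unfold marginal at hdim ih ⊢
    linarith

end Marginal

section BudgetedGains

variable {V : Type*} [Fintype V] [DecidableEq V] {f : Finset V → ℝ} {k : ℕ} {X : Finset V}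
  {d : ℝ}

/-- `Δ_k(X)` is the greatest element of this set. -/
def budgetedGains (f : Finset V → ℝ) (k : ℕ) (X : Finset V) : Set ℝ :=
  {y | ∃ T : Finset V, T ⊆ univ \ X ∧ T.card ≤ k ∧ y = ∑ v ∈ T, marginal f v X}

theorem nonneg_of_isGreatest_budgetedGains (hd : IsGreatest (budgetedGains f k X) d) : 0 ≤ d :=
  hd.2 ⟨∅, empty_subset _, by simp, by simp⟩

theorem apply_le_add_of_isGreatest_budgetedGains (hmono : Monotone f)
    (hsub : ∀ S T : Finset V, f (S ∪ T) + f (S ∩ T) ≤ f S + f T)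
    (hd : IsGreatest (budgetedGains f k X) d) {OPT : Finset V} (hOPT : OPT.card ≤ k) :
    f OPT ≤ f X + d := by
  have hgain : ∑ v ∈ OPT \ X, marginal f v X ≤ d :=
    hd.2 ⟨OPT \ X, sdiff_subset_sdiff (subset_univ _) le_rfl,
      (card_le_card sdiff_subset).trans hOPT, rfl⟩
  calc f OPT ≤ f (X ∪ OPT \ X) := hmono (by simp)
    _ ≤ f X + ∑ v ∈ OPT \ X, marginal f v X := apply_union_le_add_sum_marginal hmono hsub _ _
    _ ≤ f X + d := by linarith

theorem le_mul_of_isGreatest_budgetedGains (hd : IsGreatest (budgetedGains f k X) d) {g : ℝ}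
    (hg0 : 0 ≤ g) (hg : ∀ v ∈ univ \ X, marginal f v X ≤ g) : d ≤ k * g := by
  obtain ⟨T, hTX, hTk, rfl⟩ := hd.1
  calc ∑ v ∈ T, marginal f v X ≤ T.card * g := by
        simpa using sum_le_sum fun v hv => hg v (hTX hv)
    _ ≤ k * g := mul_le_mul_of_nonneg_right (by exact_mod_cast hTk) hg0

end BudgetedGains

section GreedyRecursion

variable {a : ℕ → ℝ} {L : ℝ} {k : ℕ}

theorem sub_le_one_sub_inv_pow_mul (hk : 1 ≤ k)
    (hgap : ∀ i < k, L ≤ a i + k * (a (i + 1) - a i)) :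
    ∀ i ≤ k, L - a i ≤ (1 - 1 / k) ^ i * (L - a 0) := by
  have hk' : (1 : ℝ) ≤ k := by exact_mod_cast hk
  have hc : 0 ≤ 1 - 1 / (k : ℝ) := sub_nonneg.2 (div_le_one_of_le₀ hk' (by linarith))
  intro i
  induction i with
  | zero => simp
  | succ i ih =>
    intro hi
    have hgain : (L - a i) / k ≤ a (i + 1) - a i := by
      rw [div_le_iff₀ (by positivity)]
      linarith [hgap i hi]
    calc L - a (i + 1) ≤ (1 - 1 / k) * (L - a i) := by
          linarith [show (1 - 1 / k) * (L - a i) = L - a i - (L - a i) / k by ring]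
      _ ≤ (1 - 1 / k) * ((1 - 1 / k) ^ i * (L - a 0)) :=
        mul_le_mul_of_nonneg_left (ih (by omega)) hc
      _ = (1 - 1 / k) ^ (i + 1) * (L - a 0) := by ring

theorem one_sub_inv_exp_mul_le (hk : 1 ≤ k) (ha0 : a 0 = 0) (hL : 0 ≤ L)
    (hgap : ∀ i < k, L ≤ a i + k * (a (i + 1) - a i)) :
    (1 - 1 / Real.exp 1) * L ≤ a k := by
  have hpow : (1 - 1 / (k : ℝ)) ^ k ≤ 1 / Real.exp 1 := by
    rw [one_div (Real.exp 1), ← Real.exp_neg]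
    exact Real.one_sub_div_pow_le_exp_neg (by exact_mod_cast hk)
  have hdecay := sub_le_one_sub_inv_pow_mul hk hgap k le_rfl
  rw [ha0, sub_zero] at hdecay
  linarith [mul_le_mul_of_nonneg_right hpow hL]

end GreedyRecursion

theorem stmt18_general {V : Type*} [Fintype V] [DecidableEq V]
    (f : Finset V → ℝ)
    (hf0 : f ∅ = 0)
    (hmono : ∀ S T : Finset V, S ⊆ T → f S ≤ f T)
    (hsub : ∀ S T : Finset V, f (S ∪ T) + f (S ∩ T) ≤ f S + f T)
    (k : ℕ) (hk : 1 ≤ k)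
    (u : ℕ → V)
    (S : ℕ → Finset V) (hS : ∀ i : ℕ, S i = (Finset.range i).image u)
    (hgreedy : ∀ i : ℕ, i < k → ∀ v ∈ (Finset.univ : Finset V) \ S i,
      f (insert (u i) (S i)) - f (S i) ≥ f (insert v (S i)) - f (S i))
    (Δ : Finset V → ℝ)
    (hΔ : ∀ X : Finset V, IsGreatest
      {y : ℝ | ∃ T : Finset V, T ⊆ Finset.univ \ X ∧ T.card ≤ k ∧
        y = ∑ v ∈ T, (f (insert v X) - f X)} (Δ X)) :
    ∀ OPT : Finset V, OPT.card ≤ k →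
      f OPT ≤ (Finset.range (k + 1)).inf' Finset.nonempty_range_add_one
        (fun i => f (S i) + Δ (S i)) ∧
      (1 - 1 / Real.exp 1) * (Finset.range (k + 1)).inf' Finset.nonempty_range_add_one
        (fun i => f (S i) + Δ (S i)) ≤ f (S k) := by
  intro OPT hOPT
  have hmono' : Monotone f := fun X Y h => hmono X Y h
  have hΔ' (X : Finset V) : IsGreatest (budgetedGains f k X) (Δ X) := hΔ X
  constructor
  · exact le_inf' _ _ fun i _ => apply_le_add_of_isGreatest_budgetedGains hmono' hsub (hΔ' _) hOPT
  · have hΛ0 : 0 ≤ (range (k + 1)).inf' nonempty_range_add_one fun i => f (S i) + Δ (S i) :=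
      le_inf' _ _ fun i _ =>
        add_nonneg (hf0 ▸ hmono' (empty_subset _)) (nonneg_of_isGreatest_budgetedGains (hΔ' _))
    refine one_sub_inv_exp_mul_le (a := fun i => f (S i)) hk (by simp [hS, hf0]) hΛ0 fun i hi => ?_
    have hSsucc : S (i + 1) = insert (u i) (S i) := by
      rw [hS, hS, range_add_one, image_insert]
    have hΔle := le_mul_of_isGreatest_budgetedGains (hΔ' (S i))
      (marginal_nonneg hmono' (u i) (S i)) (hgreedy i hi)
    have hΛle := inf'_le (fun j => f (S j) + Δ (S j)) (mem_range.2 (by omega : i < k + 1))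
    rw [hSsucc]
    exact hΛle.trans (by unfold marginal at hΔle; linarith)

/-- Theorem 5.6 (cardinality constraint): with Λ := min_{0 ≤ i ≤ k} (f(S_i) + Δ_k(S_i)),
where Δ_k(S) is the max of ∑_{v ∈ T} f(v∣S) over T ⊆ V \ S with |T| ≤ k,
every OPT with |OPT| ≤ k satisfies f(OPT) ≤ Λ and (1 − 1/e)·Λ ≤ f(S_k). -/
theorem stmt18 {V : Type*} [Fintype V] [DecidableEq V]
    (f : Finset V → ℝ)
    (hf0 : f ∅ = 0)
    (hmono : ∀ S T : Finset V, S ⊆ T → f S ≤ f T)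
    (hsub : ∀ S T : Finset V, f (S ∪ T) + f (S ∩ T) ≤ f S + f T)
    (k : ℕ) (hk : 1 ≤ k)
    (u : ℕ → V)
    (hinj : ∀ i j : ℕ, i < k → j < k → u i = u j → i = j)
    (S : ℕ → Finset V) (hS : ∀ i : ℕ, S i = (Finset.range i).image u)
    (hgreedy : ∀ i : ℕ, i < k → ∀ v ∈ (Finset.univ : Finset V) \ S i,
      f (insert (u i) (S i)) - f (S i) ≥ f (insert v (S i)) - f (S i))
    (Δ : Finset V → ℝ)
    (hΔ : ∀ X : Finset V, IsGreatest
      {y : ℝ | ∃ T : Finset V, T ⊆ Finset.univ \ X ∧ T.card ≤ k ∧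
        y = ∑ v ∈ T, (f (insert v X) - f X)} (Δ X)) :
    ∀ OPT : Finset V, OPT.card ≤ k →
      f OPT ≤ (Finset.range (k + 1)).inf' Finset.nonempty_range_add_one
        (fun i => f (S i) + Δ (S i)) ∧
      (1 - 1 / Real.exp 1) * (Finset.range (k + 1)).inf' Finset.nonempty_range_add_one
        (fun i => f (S i) + Δ (S i)) ≤ f (S k) :=
  stmt18_general f hf0 hmono hsub k hk u S hS hgreedy Δ hΔ
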